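/- Let A be a symmetric n×n real matrix and η : ℝ × [0,1] → ℝⁿ bounded and C² with Δη − A ∂η/∂t = 0, where Δη = ∂²η/∂s² + ∂²η/∂t², η(s,0) = η(s,1) = 0 for all s, and η(s,t) → 0 as |s| → ∞ uniformly in t. Then η ≡ 0. -/

import Mathlib

open Set Filter Topology


lemma contdiff_deriv {g : ℝ → ℝ} (hg : ContDiff ℝ 2 g) : ContDiff ℝ 1 (deriv g) := by
  have : ((2:ℕ) : WithTop ℕ∞) = 1 + 1 := by norm_num
  exact (contDiff_succ_iff_deriv.mp (this ▸ hg)).2.2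

/-- Second derivative test: at a local max, the second derivative is nonpositive. -/
lemma sec_deriv_test {g : ℝ → ℝ} (hg : ContDiff ℝ 2 g) (h : IsLocalMax g 0) :
    deriv (deriv g) 0 ≤ 0 := by
  by_contra hc
  push_neg at hc
  have hg1 : ContDiff ℝ 1 (deriv g) := contdiff_deriv hg
  have hd0 : deriv g 0 = 0 := h.deriv_eq_zero
  have hda : HasDerivAt (deriv g) (deriv (deriv g) 0) 0 :=
    ((hg1.differentiable (by norm_num)) 0).hasDerivAt
  have hslope : Tendsto (slope (deriv g) 0) (𝓝[≠] 0) (𝓝 (deriv (deriv g) 0)) :=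
    hasDerivAt_iff_tendsto_slope.1 hda
  have hpos : ∀ᶠ x in 𝓝[>] (0:ℝ), 0 < deriv g x := by
    have h1 : ∀ᶠ x in 𝓝[≠] (0:ℝ), 0 < slope (deriv g) 0 x :=
      hslope (Ioi_mem_nhds hc)
    have h2 : ∀ᶠ x in 𝓝[>] (0:ℝ), 0 < slope (deriv g) 0 x :=
      h1.filter_mono (nhdsWithin_mono 0 (fun x hx => ne_of_gt hx))
    filter_upwards [h2, self_mem_nhdsWithin] with x hx hx'
    have hxp : (0:ℝ) < x := hx'
    have hsl : slope (deriv g) 0 x = deriv g x / x := by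
      simp [slope, hd0]; ring
    rw [hsl] at hx
    have := mul_pos hx hxp
    rwa [div_mul_cancel₀ _ (ne_of_gt hxp)] at this
  have hmax : ∀ᶠ x in 𝓝[>] (0:ℝ), g x ≤ g 0 :=
    h.filter_mono nhdsWithin_le_nhds
  obtain ⟨s, hs, hsub⟩ := (hpos.and hmax).exists_mem
  rw [mem_nhdsGT_iff_exists_Ioo_subset] at hs
  obtain ⟨u, hu, husub⟩ := hs
  have hu0 : (0:ℝ) < u := hu
  have hm : u/2 ∈ Ioo (0:ℝ) u := ⟨by linarith, by linarith⟩
  have hmono : StrictMonoOn g (Icc 0 (u/2)) := by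
    apply strictMonoOn_of_deriv_pos (convex_Icc _ _) hg.continuous.continuousOn
    intro x hx
    rw [interior_Icc] at hx
    exact (hsub _ (husub ⟨hx.1, by linarith [hx.2]⟩)).1
  have hlt : g 0 < g (u/2) :=
    hmono ⟨le_rfl, by linarith⟩ ⟨by linarith, le_rfl⟩ (by linarith)
  have hle : g (u/2) ≤ g 0 := (hsub _ (husub hm)).2
  linarith

section
variable {E : Type*} [NormedAddCommGroup E] [NormedSpace ℝ E]

lemma line_contDiff (p v : E) : ContDiff ℝ 2 (fun τ : ℝ => p + τ • v) :=
  contDiff_const.add (contDiff_id.smul contDiff_const)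

lemma line_hasDerivAt (p v : E) (τ : ℝ) : HasDerivAt (fun τ : ℝ => p + τ • v) v τ := by
  simpa using ((hasDerivAt_id τ).smul_const v).const_add p

/-- `g''(0)` of the 1-d restriction equals the second directional derivative. -/
lemma deriv2_line {w : E → ℝ} (hw : ContDiff ℝ 2 w) (p v : E) :
    deriv (deriv (fun τ : ℝ => w (p + τ • v))) 0 = fderiv ℝ (fderiv ℝ w) p v v := by
  have hwd : Differentiable ℝ w := hw.differentiable (by norm_num)
  have hfd : ContDiff ℝ 1 (fderiv ℝ w) := hw.fderiv_right (by norm_num)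
  have hderiv : deriv (fun τ : ℝ => w (p + τ • v)) = fun τ => fderiv ℝ w (p + τ • v) v := by
    funext τ
    exact (((hwd _).hasFDerivAt).comp_hasDerivAt τ (line_hasDerivAt p v τ)).deriv
  rw [hderiv]
  have h1 : HasDerivAt (fun τ : ℝ => fderiv ℝ w (p + τ • v))
      (fderiv ℝ (fderiv ℝ w) p v) 0 := by
    have hp : HasFDerivAt (fderiv ℝ w) (fderiv ℝ (fderiv ℝ w) p) (p + (0:ℝ) • v) := by
      simpa using ((hfd.differentiable (by norm_num)) p).hasFDerivAt
    exact hp.comp_hasDerivAt 0 (line_hasDerivAt p v 0)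
  have h2 : HasDerivAt (fun τ : ℝ => fderiv ℝ w (p + τ • v) v)
      (fderiv ℝ (fderiv ℝ w) p v v) 0 :=
    (ContinuousLinearMap.apply ℝ ℝ v).hasFDerivAt.comp_hasDerivAt 0 h1
  exact h2.deriv

/-- At an interior local max of a C² function, second directional derivatives are ≤ 0. -/
lemma second_dirderiv_nonpos {w : E → ℝ} (hw : ContDiff ℝ 2 w) {p : E}
    (h : IsLocalMax w p) (v : E) : iteratedFDeriv ℝ 2 w p ![v, v] ≤ 0 := by
  have hg : ContDiff ℝ 2 (fun τ : ℝ => w (p + τ • v)) := hw.comp (line_contDiff p v)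
  have hmax : IsLocalMax (fun τ : ℝ => w (p + τ • v)) 0 := by
    have hc : ContinuousAt (fun τ : ℝ => p + τ • v) 0 := ((line_contDiff p v).continuous).continuousAt
    have h' : IsLocalMax w ((fun τ : ℝ => p + τ • v) 0) := by simpa using h
    exact IsMaxFilter.comp_tendsto h' hc
  have := sec_deriv_test hg hmax
  rw [deriv2_line hw p v] at this
  rw [iteratedFDeriv_two_apply]
  simpa using this
end

namespace Stmt18Aux

noncomputable def fstL : (ℝ × ℝ) →L[ℝ] ℝ := ContinuousLinearMap.fst ℝ ℝ ℝ

lemma q_hasFDerivAt (δ : ℝ) (p : ℝ × ℝ) :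
    HasFDerivAt (fun p : ℝ × ℝ => δ * p.1 ^ 2) ((2 * δ * p.1) • fstL) p := by
  have h : HasFDerivAt (fun p : ℝ × ℝ => δ * p.1 ^ 2)
      (δ • ((p.1 • fstL) + (p.1 • fstL))) p := by
    have h1 : HasFDerivAt (fun p : ℝ × ℝ => p.1) fstL p := hasFDerivAt_fst
    simpa [pow_two] using (h1.mul h1).const_mul δ
  convert h using 1
  refine ContinuousLinearMap.ext fun x => ?_
  simp only [ContinuousLinearMap.smul_apply, ContinuousLinearMap.add_apply]
  simp [fstL]
  ring

lemma q_fderiv (δ : ℝ) : fderiv ℝ (fun p : ℝ × ℝ => δ * p.1 ^ 2)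
    = fun p : ℝ × ℝ => (2 * δ * p.1) • fstL := funext fun p => (q_hasFDerivAt δ p).fderiv

noncomputable def D2q (δ : ℝ) : (ℝ × ℝ) →L[ℝ] ((ℝ × ℝ) →L[ℝ] ℝ) :=
  ContinuousLinearMap.smulRight ((2 * δ) • fstL) fstL

lemma q_fderiv2 (δ : ℝ) (p : ℝ × ℝ) :
    HasFDerivAt (fderiv ℝ (fun p : ℝ × ℝ => δ * p.1 ^ 2)) (D2q δ) p := by
  rw [q_fderiv]
  have h1 : HasFDerivAt (fun p : ℝ × ℝ => 2 * δ * p.1) ((2 * δ) • fstL) p := by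
    simpa [fstL] using (hasFDerivAt_fst (𝕜 := ℝ) (p := p)).const_mul (2 * δ)
  exact h1.smul_const fstL

lemma q_contDiff (δ : ℝ) : ContDiff ℝ 2 (fun p : ℝ × ℝ => δ * p.1 ^ 2) :=
  contDiff_const.mul (contDiff_fst.pow 2)

/-- Maximum principle on the rectangle `[-R, R] × [0, 1]` for `∂²ₛ + ∂²ₜ - λ ∂ₜ`. -/
lemma max_principle {u : ℝ × ℝ → ℝ} (hu : ContDiff ℝ 2 u) (lam : ℝ)
    (hequ : ∀ p : ℝ × ℝ, p.2 ∈ Icc (0:ℝ) 1 →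
      iteratedFDeriv ℝ 2 u p ![((1:ℝ),(0:ℝ)), (1,0)] +
      iteratedFDeriv ℝ 2 u p ![((0:ℝ),(1:ℝ)), (0,1)] - lam * fderiv ℝ u p (0,1) = 0)
    {R M : ℝ} (hR : 0 < R)
    (hbd : ∀ p : ℝ × ℝ, p ∈ Icc (-R) R ×ˢ Icc (0:ℝ) 1 →
      (|p.1| = R ∨ p.2 = 0 ∨ p.2 = 1) → u p ≤ M) :
    ∀ p ∈ Icc (-R) R ×ˢ Icc (0:ℝ) 1, u p ≤ M := by
  intro p hp
  have key : ∀ δ > 0, u p ≤ M + δ * R ^ 2 := by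
    intro δ hδ
    set q : ℝ × ℝ → ℝ := fun p => δ * p.1 ^ 2 with hq
    set w : ℝ × ℝ → ℝ := fun p => u p + q p with hwdef
    have hw : ContDiff ℝ 2 w := hu.add (q_contDiff δ)
    set rect : Set (ℝ × ℝ) := Icc (-R) R ×ˢ Icc (0:ℝ) 1 with hrect
    have hcomp : IsCompact rect := isCompact_Icc.prod isCompact_Icc
    have hne : rect.Nonempty := by
      refine ⟨(0, 0), ?_⟩
      simp only [hrect, Set.mem_prod, Set.mem_Icc]
      norm_num
      linarith
    obtain ⟨x, hx, hmax⟩ := hcomp.exists_isMaxOn hne hw.continuous.continuousOn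
    -- The max cannot be in the interior
    have hxbd : |x.1| = R ∨ x.2 = 0 ∨ x.2 = 1 := by
      by_contra hcon
      push_neg at hcon
      obtain ⟨h1, h2, h3⟩ := hcon
      have hxint : x ∈ interior rect := by
        rw [hrect, interior_prod_eq, interior_Icc, interior_Icc]
        obtain ⟨⟨ha, hb⟩, ⟨hc, hd⟩⟩ := hx
        refine ⟨⟨lt_of_le_of_ne ha ?_, lt_of_le_of_ne hb ?_⟩,
          ⟨lt_of_le_of_ne hc (Ne.symm h2), lt_of_le_of_ne hd h3⟩⟩
        · intro he; exact h1 (by rw [← he, abs_neg, abs_of_pos hR])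
        · intro he; exact h1 (by rw [he, abs_of_pos hR])
      have hloc : IsLocalMax w x := hmax.isLocalMax (mem_interior_iff_mem_nhds.mp hxint)
      -- derivatives of w vs u
      have hud : Differentiable ℝ u := hu.differentiable (by norm_num)
      have hqd : Differentiable ℝ q := (q_contDiff δ).differentiable (by norm_num)
      have hfw : ∀ y, fderiv ℝ w y = fderiv ℝ u y + fderiv ℝ q y := fun y =>
        fderiv_add (hud y) (hqd y)
      have hfw0 : fderiv ℝ w x = 0 := hloc.fderiv_eq_zero
      have hfq : fderiv ℝ q x (0, 1) = 0 := by
        rw [q_fderiv]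
        simp [fstL]
      have hfu0 : fderiv ℝ u x (0, 1) = 0 := by
        have := congrArg (fun L : (ℝ × ℝ) →L[ℝ] ℝ => L (0, 1)) (hfw x)
        simp only [hfw0] at this
        simp only [ContinuousLinearMap.add_apply, ContinuousLinearMap.zero_apply] at this
        linarith [hfq ▸ this]
      -- second derivatives
      have hfu1 : ContDiff ℝ 1 (fderiv ℝ u) := hu.fderiv_right (by norm_num)
      have h2w : ∀ v : ℝ × ℝ, iteratedFDeriv ℝ 2 w x ![v, v]
          = iteratedFDeriv ℝ 2 u x ![v, v] + 2 * δ * v.1 * v.1 := by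
        intro v
        rw [iteratedFDeriv_two_apply, iteratedFDeriv_two_apply]
        have hD : HasFDerivAt (fderiv ℝ w)
            (fderiv ℝ (fderiv ℝ u) x + D2q δ) x := by
          have : fderiv ℝ w = fun y => fderiv ℝ u y + fderiv ℝ q y := funext hfw
          rw [this]
          exact ((hfu1.differentiable (by norm_num)) x).hasFDerivAt.add (q_fderiv2 δ x)
        rw [hD.fderiv]
        simp [D2q, fstL, Matrix.cons_val_zero, Matrix.cons_val_one]
        try ring
      have hss := second_dirderiv_nonpos hw hloc ((1:ℝ), (0:ℝ))
      have htt := second_dirderiv_nonpos hw hloc ((0:ℝ), (1:ℝ))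
      rw [h2w] at hss htt
      have heqx := hequ x hx.2
      simp only [hfu0, mul_zero, sub_zero] at heqx
      simp only at hss htt
      nlinarith
    -- conclude
    have hwx : w x ≤ M + δ * R ^ 2 := by
      have h1 : u x ≤ M := hbd x hx hxbd
      have h2 : q x ≤ δ * R ^ 2 := by
        have : |x.1| ≤ R := abs_le.mpr ⟨hx.1.1, hx.1.2⟩
        have hx2 : x.1 ^ 2 ≤ R ^ 2 := by nlinarith [abs_nonneg x.1, sq_abs x.1]
        exact mul_le_mul_of_nonneg_left hx2 (le_of_lt hδ)
      calc w x = u x + q x := rfl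
        _ ≤ M + δ * R ^ 2 := add_le_add h1 h2
    have hup : u p ≤ w p := by
      have : 0 ≤ q p := by
        simp only [hq]
        positivity
      simp only [hwdef]; linarith
    exact hup.trans ((hmax hp).trans hwx)
  by_contra hcon
  push_neg at hcon
  have hδ : (u p - M) / (2 * R ^ 2) > 0 := div_pos (by linarith) (by positivity)
  have := key _ hδ
  have hR2 : (0:ℝ) < R ^ 2 := by positivity
  rw [div_mul_eq_mul_div, mul_comm] at this
  have h3 : R ^ 2 * (u p - M) / (2 * R ^ 2) = (u p - M) / 2 := by
    field_simp
  rw [h3] at this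
  linarith


open Matrix in
lemma dot_nonpos {n : ℕ} (A : Matrix (Fin n) (Fin n) ℝ) (hA : A.IsSymm)
    (η : ℝ × ℝ → (Fin n → ℝ)) (hC2 : ContDiff ℝ 2 η)
    (heq : ∀ s t : ℝ, t ∈ Set.Icc (0 : ℝ) 1 →
      (iteratedFDeriv ℝ 2 η (s, t)) ![((1 : ℝ), (0 : ℝ)), (1, 0)] +
        (iteratedFDeriv ℝ 2 η (s, t)) ![((0 : ℝ), (1 : ℝ)), (0, 1)] -
        A.mulVec (fderiv ℝ η (s, t) (0, 1)) = 0)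
    (hbdry : ∀ s : ℝ, η (s, 0) = 0 ∧ η (s, 1) = 0)
    (hdecay : ∀ ε > 0, ∃ R : ℝ, ∀ s t : ℝ, R ≤ |s| → t ∈ Set.Icc (0 : ℝ) 1 →
      ‖η (s, t)‖ ≤ ε)
    (c : Fin n → ℝ) (μ : ℝ) (hc : A.mulVec c = μ • c) :
    ∀ s t : ℝ, t ∈ Set.Icc (0 : ℝ) 1 → c ⬝ᵥ η (s, t) ≤ 0 := by
  set ℓ : (Fin n → ℝ) →L[ℝ] ℝ :=
    ∑ i, c i • (ContinuousLinearMap.proj i : (Fin n → ℝ) →L[ℝ] ℝ) with hℓdef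
  have hℓ : ∀ z : Fin n → ℝ, ℓ z = c ⬝ᵥ z := by
    intro z
    simp [hℓdef, dotProduct, ContinuousLinearMap.sum_apply]
  set u : ℝ × ℝ → ℝ := ℓ ∘ η with hudef
  have hu : ContDiff ℝ 2 u := ℓ.contDiff.comp hC2
  have hηd : Differentiable ℝ η := hC2.differentiable (by norm_num)
  have hiter : ∀ (p : ℝ × ℝ) (m : Fin 2 → ℝ × ℝ),
      iteratedFDeriv ℝ 2 u p m = ℓ (iteratedFDeriv ℝ 2 η p m) := by
    intro p m
    rw [hudef, ℓ.iteratedFDeriv_comp_left hC2.contDiffAt le_rfl]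
    rfl
  have hfder : ∀ p : ℝ × ℝ, fderiv ℝ u p (0, 1) = ℓ (fderiv ℝ η p (0, 1)) := by
    intro p
    have : HasFDerivAt u (ℓ.comp (fderiv ℝ η p)) p :=
      ℓ.hasFDerivAt.comp p (hηd p).hasFDerivAt
    rw [this.fderiv]
    rfl
  have hAdot : ∀ y : Fin n → ℝ, c ⬝ᵥ (A.mulVec y) = μ * (c ⬝ᵥ y) := by
    intro y
    rw [Matrix.dotProduct_mulVec]
    have h1 : c ᵥ* A = μ • c := by rw [← hA.eq, Matrix.vecMul_transpose, hc]
    rw [h1, smul_dotProduct]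
    simp
  have hequ : ∀ p : ℝ × ℝ, p.2 ∈ Set.Icc (0:ℝ) 1 →
      iteratedFDeriv ℝ 2 u p ![((1:ℝ),(0:ℝ)), (1,0)] +
      iteratedFDeriv ℝ 2 u p ![((0:ℝ),(1:ℝ)), (0,1)] - μ * fderiv ℝ u p (0,1) = 0 := by
    intro p hp
    have hv := heq p.1 p.2 hp
    rw [Prod.mk.eta] at hv
    have := congrArg ℓ hv
    rw [map_sub, map_add, map_zero] at this
    rw [hiter, hiter, hfder, hℓ, hℓ, hℓ]
    rw [hℓ, hℓ, hℓ, hAdot] at this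
    linarith [this]
  -- boundedness argument
  intro s t ht
  have hCc : (0:ℝ) ≤ ∑ i, |c i| := Finset.sum_nonneg fun i _ => abs_nonneg _
  set Cc : ℝ := ∑ i, |c i| with hCcdef
  have hbound : ∀ ε > 0, u (s, t) ≤ ε * Cc := by
    intro ε hε
    obtain ⟨R₀, hR₀⟩ := hdecay ε hε
    set R : ℝ := max R₀ (|s| + 1) with hRdef
    have hRpos : 0 < R := lt_of_lt_of_le (by positivity) (le_max_right _ _)
    have hball : (s, t) ∈ Set.Icc (-R) R ×ˢ Set.Icc (0:ℝ) 1 := by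
      constructor
      · have h1 : |s| ≤ R := le_trans (by linarith) (le_max_right R₀ (|s| + 1))
        exact ⟨neg_le_of_abs_le h1, le_of_abs_le h1⟩
      · exact ht
    refine max_principle hu μ hequ hRpos ?_ (s, t) hball
    intro p hp hpb
    rcases hpb with h1 | h2 | h3
    · -- side boundary: decay bound
      have hdec : ‖η (p.1, p.2)‖ ≤ ε := by
        refine hR₀ p.1 p.2 ?_ hp.2
        rw [h1]
        exact le_max_left _ _
      have : u p = c ⬝ᵥ η (p.1, p.2) := by rw [hudef]; simp only [Function.comp_apply, hℓ, Prod.mk.eta]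
      rw [this]
      calc c ⬝ᵥ η (p.1, p.2) ≤ |c ⬝ᵥ η (p.1, p.2)| := le_abs_self _
        _ ≤ ∑ i, |c i * η (p.1, p.2) i| := Finset.abs_sum_le_sum_abs _ _
        _ ≤ ∑ i, |c i| * ε := by
            refine Finset.sum_le_sum fun i _ => ?_
            rw [abs_mul]
            refine mul_le_mul_of_nonneg_left ?_ (abs_nonneg _)
            calc |η (p.1, p.2) i| = ‖η (p.1, p.2) i‖ := rfl
              _ ≤ ‖η (p.1, p.2)‖ := norm_le_pi_norm _ i
              _ ≤ ε := hdec
        _ = ε * Cc := by rw [← Finset.sum_mul, mul_comm]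
    · -- bottom
      have : η (p.1, p.2) = 0 := by rw [h2]; exact (hbdry p.1).1
      have hup : u p = 0 := by
        rw [hudef]; simp only [Function.comp_apply]
        rw [← Prod.mk.eta (p := p), this, map_zero]
      rw [hup]; positivity
    · -- top
      have : η (p.1, p.2) = 0 := by rw [h3]; exact (hbdry p.1).2
      have hup : u p = 0 := by
        rw [hudef]; simp only [Function.comp_apply]
        rw [← Prod.mk.eta (p := p), this, map_zero]
      rw [hup]; positivity
  -- conclude u (s,t) ≤ 0
  have hust : u (s, t) ≤ 0 := by
    by_contra hcon
    push_neg at hcon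
    set ε := u (s, t) / (2 * (Cc + 1)) with hεdef
    have hεpos : 0 < ε := div_pos hcon (by positivity)
    have hb := hbound ε hεpos
    have h1 : ε * (Cc + 1) = u (s, t) / 2 := by
      rw [hεdef]; field_simp
    have h2 : ε * Cc ≤ ε * (Cc + 1) := by nlinarith
    linarith
  have : u (s, t) = c ⬝ᵥ η (s, t) := by rw [hudef]; simp only [Function.comp_apply, hℓ]
  linarith [this ▸ hust]

end Stmt18Aux

open Stmt18Aux in
/-- Vector-valued elliptic vanishing: a bounded C² map `η : ℝ × [0,1] → ℝⁿ` with
`Δη - A ∂η/∂t = 0` (`A` a symmetric matrix), vanishing on the boundary of the strip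
and tending to `0` uniformly as `|s| → ∞`, is identically zero on the strip. -/
theorem stmt18 {n : ℕ} (A : Matrix (Fin n) (Fin n) ℝ) (hA : A.IsSymm)
    (η : ℝ × ℝ → (Fin n → ℝ)) (hC2 : ContDiff ℝ 2 η)
    (hbdd : ∃ C, ∀ s t : ℝ, t ∈ Set.Icc (0 : ℝ) 1 → ‖η (s, t)‖ ≤ C)
    (heq : ∀ s t : ℝ, t ∈ Set.Icc (0 : ℝ) 1 →
      (iteratedFDeriv ℝ 2 η (s, t)) ![((1 : ℝ), (0 : ℝ)), (1, 0)] +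
        (iteratedFDeriv ℝ 2 η (s, t)) ![((0 : ℝ), (1 : ℝ)), (0, 1)] -
        A.mulVec (fderiv ℝ η (s, t) (0, 1)) = 0)
    (hbdry : ∀ s : ℝ, η (s, 0) = 0 ∧ η (s, 1) = 0)
    (hdecay : ∀ ε > 0, ∃ R : ℝ, ∀ s t : ℝ, R ≤ |s| → t ∈ Set.Icc (0 : ℝ) 1 →
      ‖η (s, t)‖ ≤ ε) :
    ∀ s t : ℝ, t ∈ Set.Icc (0 : ℝ) 1 → η (s, t) = 0 := by
  intro s t ht
  have hAh : A.IsHermitian := by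
    rwa [Matrix.IsHermitian, Matrix.conjTranspose_eq_transpose_of_trivial]
  set b := hAh.eigenvectorBasis with hbdef
  have hdot : ∀ i, dotProduct (⇑(b i)) (η (s, t)) = 0 := by
    intro i
    have hpos := dot_nonpos A hA η hC2 heq hbdry hdecay (⇑(b i)) (hAh.eigenvalues i)
      (hAh.mulVec_eigenvectorBasis i) s t ht
    have hneg := dot_nonpos A hA η hC2 heq hbdry hdecay (-⇑(b i)) (hAh.eigenvalues i)
      (by rw [Matrix.mulVec_neg, hAh.mulVec_eigenvectorBasis i, smul_neg]) s t ht
    rw [neg_dotProduct] at hneg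
    linarith
  have hx : b.repr ((WithLp.equiv 2 (Fin n → ℝ)).symm (η (s, t))) = 0 := by
    ext i
    rw [OrthonormalBasis.repr_apply_apply, EuclideanSpace.inner_eq_star_dotProduct]
    simpa [dotProduct, mul_comm] using hdot i
  have h0 := b.repr.map_eq_zero_iff.mp hx
  simpa using congrArg (WithLp.equiv 2 (Fin n → ℝ)) h0
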